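/- Let X be a compact, Hausdorff, totally disconnected topological space. Then the map Φ_X : X → X_{Clopens(X)} sending x to the function (C : Clopens X) ↦ decide (x ∈ C) is well-defined (its values satisfy the homomorphism conditions defining the Stone space) and is a homeomorphism from X onto the Stone space of the Boolean algebra Clopens(X). -/

import Mathlib

/-- The defining conditions for a point of the Stone space of a Boolean algebra `B`. -/
def IsStonePoint {B : Type*} [BooleanAlgebra B] (f : B → Bool) : Prop :=
  f ⊥ = false ∧ f ⊤ = true ∧ (∀ a b : B, f (a ⊓ b) = (f a && f b)) ∧
    (∀ a b : B, f (a ⊔ b) = (f a || f b))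

/-- The Stone space of a Boolean algebra `B`, as a subspace of the product
`B → Bool` with `Bool` discrete. -/
def StoneSpace (B : Type*) [BooleanAlgebra B] : Type _ :=
  {f : B → Bool // IsStonePoint f}

instance (B : Type*) [BooleanAlgebra B] : TopologicalSpace (StoneSpace B) :=
  instTopologicalSpaceSubtype

/-! A compact Hausdorff totally disconnected space is totally separated, so points are told apart
by clopens and evaluation `X → StoneSpace (Clopens X)` is injective. Every Stone point `f` is
hit because the clopens on which `f` is `true` form a downward directed family of
nonempty closed sets, hence have a common point `x` by compactness; as `f Cᶜ = !f C`, the point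
`x` lies exactly in those clopens. Evaluation is continuous since clopens have continuous
indicators, and a continuous bijection from a compact space to a Hausdorff one is a
homeomorphism. -/

section

open TopologicalSpace

instance (B : Type*) [BooleanAlgebra B] : T2Space (StoneSpace B) :=
  inferInstanceAs (T2Space {f : B → Bool // IsStonePoint f})

namespace IsStonePoint

theorem map_compl {B : Type*} [BooleanAlgebra B] {f : B → Bool} (hf : IsStonePoint f) (a : B) :
    f aᶜ = !f a := by
  obtain ⟨hbot, htop, hinf, hsup⟩ := hf
  have hdisjoint := hinf a aᶜ
  have hcover := hsup a aᶜ
  rw [inf_compl_eq_bot, hbot] at hdisjoint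
  rw [sup_compl_eq_top, htop] at hcover
  revert hdisjoint hcover
  cases f a <;> cases f aᶜ <;> simp

theorem exists_eq_true_iff_mem {X : Type*} [TopologicalSpace X] [CompactSpace X]
    {f : Clopens X → Bool} (hf : IsStonePoint f) :
    ∃ x : X, ∀ C : Clopens X, f C = true ↔ x ∈ C := by
  obtain ⟨hbot, htop, hinf, -⟩ := id hf
  let S := {C : Clopens X // f C = true}
  have : Nonempty S := ⟨⟨⊤, htop⟩⟩
  have hnonempty : ∀ C : S, (C.1 : Set X).Nonempty := by
    rintro ⟨C, hC⟩
    rw [Set.nonempty_iff_ne_empty, ne_eq, ← Clopens.coe_bot, SetLike.coe_set_eq]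
    rintro rfl
    simp [hbot] at hC
  have hdirected : Directed (· ⊇ ·) fun C : S => (C.1 : Set X) := by
    rintro ⟨C, hC⟩ ⟨D, hD⟩
    exact ⟨⟨C ⊓ D, by simp [hinf, hC, hD]⟩, Set.inter_subset_left, Set.inter_subset_right⟩
  obtain ⟨x, hx⟩ := IsCompact.nonempty_iInter_of_directed_nonempty_isCompact_isClosed _
    hdirected hnonempty (fun C => C.1.isClopen.isClosed.isCompact) fun C => C.1.isClopen.isClosed
  have hmem : ∀ C : Clopens X, f C = true → x ∈ C := fun C hC => Set.mem_iInter.mp hx ⟨C, hC⟩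
  refine ⟨x, fun C => ⟨hmem C, fun hxC => ?_⟩⟩
  by_contra hC
  exact hmem Cᶜ (by simpa [hf.map_compl] using hC) hxC

end IsStonePoint

section ClopensEval

variable {X : Type*} [TopologicalSpace X]

theorem isStonePoint_boolIndicator (x : X) :
    IsStonePoint fun C : Clopens X => (C : Set X).boolIndicator x := by
  classical
  refine ⟨?_, ?_, fun a b => ?_, fun a b => ?_⟩ <;> simp [Set.boolIndicator]

variable (X) in
noncomputable def clopensEval (x : X) : StoneSpace (Clopens X) :=
  ⟨fun C => (C : Set X).boolIndicator x, isStonePoint_boolIndicator x⟩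

theorem clopensEval_apply_eq_true_iff (x : X) (C : Clopens X) :
    (clopensEval X x).1 C = true ↔ x ∈ C :=
  ((C : Set X).mem_iff_boolIndicator x).symm

theorem continuous_clopensEval : Continuous (clopensEval X) :=
  (continuous_pi fun C => (continuous_boolIndicator_iff_isClopen _).mpr C.isClopen).subtype_mk _

theorem clopensEval_injective [TotallySeparatedSpace X] : Function.Injective (clopensEval X) := by
  intro x y hxy
  by_contra hne
  obtain ⟨U, hU, hxU, hyU⟩ := exists_isClopen_of_totally_separated hne
  have hsame := congrArg (fun f : StoneSpace (Clopens X) => f.1 ⟨U, hU⟩ = true) hxy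
  simp only [clopensEval_apply_eq_true_iff] at hsame
  exact hyU (hsame.mp hxU)

theorem clopensEval_surjective [CompactSpace X] : Function.Surjective (clopensEval X) := by
  intro f
  obtain ⟨x, hx⟩ := f.2.exists_eq_true_iff_mem
  refine ⟨x, Subtype.ext <| funext fun C => Bool.eq_iff_iff.mpr ?_⟩
  exact (clopensEval_apply_eq_true_iff x C).trans (hx C).symm

end ClopensEval

end

open TopologicalSpace in
/-- A compact Hausdorff totally disconnected space `X` is canonically homeomorphic
to the Stone space of its Boolean algebra of clopen subsets, via
`x ↦ (C ↦ decide (x ∈ C))`; in particular this map is well defined (its values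
satisfy the homomorphism conditions defining the Stone space). -/
theorem homeomorph_stoneSpace_clopens (X : Type*) [TopologicalSpace X]
    [CompactSpace X] [T2Space X] [TotallyDisconnectedSpace X] :
    (∀ x : X, IsStonePoint fun C : Clopens X => (C : Set X).boolIndicator x) ∧
    ∃ Φ : X ≃ₜ StoneSpace (Clopens X),
      ∀ (x : X) (C : Clopens X), ((Φ x : StoneSpace (Clopens X)).1 C = true ↔ x ∈ C) := by
  let Φ := continuous_clopensEval.homeoOfEquivCompactToT2
    (f := Equiv.ofBijective (clopensEval X) ⟨clopensEval_injective, clopensEval_surjective⟩)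
  exact ⟨isStonePoint_boolIndicator, Φ, clopensEval_apply_eq_true_iff⟩
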